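/- With q(r) = n(1-a(r))f(r)/(r f'(r)) and M_m = l_m - q l_m q + (λ - q²)f² where l_m = -Δ_r + m²/r² + b² + (λ/2)(f²-1), one has the operator identity M_m - M₁ = (1 - q(r)²)·(m²-1)/r² (multiplication operator). Consequently, if q < 1 everywhere (the case λ < 1) then M_m - M₁ is a strictly positive multiplication operator for m ≥ 2, and if q > 1 everywhere (the case λ > 1) then it is strictly negative for m ≥ 2. -/
import Mathlib


open Set

/-- The scalar operator `l_m = -Δ_r + m²/r² + b² + (λ/2)(f²-1)` with `b = n(1-a)/r`. -/
noncomputable def lop (n : ℕ) (lam m : ℝ) (f a : ℝ → ℝ) (u : ℝ → ℝ) (s : ℝ) : ℝ :=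
  -(deriv (deriv u) s) - deriv u s / s
    + (m^2 / s^2 + ((n:ℝ) * (1 - a s) / s)^2 + lam / 2 * ((f s)^2 - 1)) * u s

/-- `q(r) = n(1-a(r))f(r)/(r f'(r))`. -/
noncomputable def qfun (n : ℕ) (f a : ℝ → ℝ) (s : ℝ) : ℝ :=
  (n:ℝ) * (1 - a s) * f s / (s * deriv f s)

/-- The operator `M_m = l_m - q l_m q + (λ - q²) f²`. -/
noncomputable def Mop (n : ℕ) (lam m : ℝ) (f a : ℝ → ℝ) (u : ℝ → ℝ) (s : ℝ) : ℝ :=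
  lop n lam m f a u s
    - qfun n f a s * lop n lam m f a (fun t => qfun n f a t * u t) s
    + (lam - (qfun n f a s)^2) * (f s)^2 * u s

/-- the operator identity `M_m - M₁ = (1 - q²)(m²-1)/r²` (a multiplication
operator), together with its sign: strictly positive for `m ≥ 2` when `q < 1` everywhere
(the case `λ < 1`), strictly negative when `q > 1` everywhere (the case `λ > 1`). -/
theorem stmt12 (n : ℕ) (hn : 0 < n) (lam : ℝ) (hlam : 0 < lam) (f a : ℝ → ℝ)
    (hf : ∀ r ∈ Ioi (0:ℝ), ContDiffAt ℝ (⊤ : ℕ∞) f r)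
    (ha : ∀ r ∈ Ioi (0:ℝ), ContDiffAt ℝ (⊤ : ℕ∞) a r)
    (hfpos : ∀ r ∈ Ioi (0:ℝ), 0 < f r)
    (hf' : ∀ r ∈ Ioi (0:ℝ), 0 < deriv f r)
    (hapos : ∀ r ∈ Ioi (0:ℝ), 0 < a r ∧ a r < 1) :
    (∀ m : ℝ, ∀ u : ℝ → ℝ, ∀ r ∈ Ioi (0:ℝ),
      Mop n lam m f a u r - Mop n lam 1 f a u r
        = (1 - (qfun n f a r)^2) * (m^2 - 1) / r^2 * u r) ∧
    ((∀ r ∈ Ioi (0:ℝ), qfun n f a r < 1) →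
      ∀ m : ℕ, 2 ≤ m → ∀ r ∈ Ioi (0:ℝ),
        0 < (1 - (qfun n f a r)^2) * ((m:ℝ)^2 - 1) / r^2) ∧
    ((∀ r ∈ Ioi (0:ℝ), 1 < qfun n f a r) →
      ∀ m : ℕ, 2 ≤ m → ∀ r ∈ Ioi (0:ℝ),
        (1 - (qfun n f a r)^2) * ((m:ℝ)^2 - 1) / r^2 < 0) := by
  have hq0 : ∀ r ∈ Ioi (0:ℝ), 0 < qfun n f a r := by
    intro r hr
    have hr0 : 0 < r := hr
    have h1 := hfpos r hr
    have h2 := hf' r hr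
    have h3 : 0 < 1 - a r := by linarith [(hapos r hr).2]
    have hn' : (0:ℝ) < (n:ℝ) := by exact_mod_cast hn
    exact div_pos (by positivity) (by positivity)
  refine ⟨?_, ?_, ?_⟩
  · intro m u r hr
    simp only [Mop, lop]
    ring
  · intro hq m hm r hr
    have hr0 : (0:ℝ) < r := hr
    have h1 : qfun n f a r < 1 := hq r hr
    have h0 : 0 < qfun n f a r := hq0 r hr
    have hsq : (qfun n f a r)^2 < 1 := by nlinarith
    have hm' : (2:ℝ) ≤ (m:ℝ) := by exact_mod_cast hm
    have hmm : (0:ℝ) < (m:ℝ)^2 - 1 := by nlinarith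
    have : 0 < (1 - (qfun n f a r)^2) * ((m:ℝ)^2 - 1) :=
      mul_pos (by linarith) hmm
    positivity
  · intro hq m hm r hr
    have hr0 : (0:ℝ) < r := hr
    have h1 : 1 < qfun n f a r := hq r hr
    have hsq : 1 < (qfun n f a r)^2 := by nlinarith
    have hm' : (2:ℝ) ≤ (m:ℝ) := by exact_mod_cast hm
    have hmm : (0:ℝ) < (m:ℝ)^2 - 1 := by nlinarith
    have : (1 - (qfun n f a r)^2) * ((m:ℝ)^2 - 1) < 0 :=
      mul_neg_of_neg_of_pos (by linarith) hmm
    exact div_neg_of_neg_of_pos this (by positivity)
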